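/- Let 𝕏 be a compact metric space. If η is a probability measure, i.e. η(𝕏)=1, then τ(K)≤η(K) for every closed set K⊆𝕏. -/

import Mathlib

/-!
A closed subset `K` of a compact space is compact, so every open cover of `K` admits a finite
subcover. Since `τ` is monotone and finitely subadditive (a `limsup` of averages of finitely
subadditive set functions), `τ(K)` is bounded by the sum of `τ` over any countable open cover
of `K`; hence `τ(K) ≤ ν_r(K)` for every `r`, and so `τ(K) ≤ ν(K) = η(K)`.
-/

open MeasureTheory Filter Set Topology
open scoped ENNReal

/-- A finitely additive outer probability on `X`: a monotone, finitely subadditive set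
function defined on all subsets of `X`, with values in `[0,1]` and total mass `1`. -/
structure FinAddOuterProb (X : Type*) where
  toFun : Set X → ℝ≥0∞
  mono' : ∀ ⦃A B : Set X⦄, A ⊆ B → toFun A ≤ toFun B
  subadd' : ∀ A B : Set X, toFun (A ∪ B) ≤ toFun A + toFun B
  le_one' : ∀ A : Set X, toFun A ≤ 1
  univ_eq' : toFun Set.univ = 1

/-- The premeasure `τ(A) = limsup_n (1/n) ∑_{j<n} ξ_j(A)`. -/
noncomputable def tauSeq {X : Type*} (ξ : ℕ → FinAddOuterProb X) (A : Set X) : ℝ≥0∞ :=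
  Filter.atTop.limsup fun n : ℕ => (∑ j ∈ Finset.range n, (ξ j).toFun A) / (n : ℝ≥0∞)

/-- `ν_r(Y)`: infimum of `∑_i τ(I_i)` over countable covers of `Y` by open sets of
diameter at most `r`. -/
noncomputable def nuSeqAux {X : Type*} [MetricSpace X] (ξ : ℕ → FinAddOuterProb X) (r : ℝ)
    (Y : Set X) : ℝ≥0∞ :=
  ⨅ (I : ℕ → Set X) (_ : Y ⊆ ⋃ n, I n) (_ : ∀ n, IsOpen (I n))
    (_ : ∀ n, EMetric.diam (I n) ≤ ENNReal.ofReal r), ∑' n, tauSeq ξ (I n)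

/-- `ν(Y) = sup_{r>0} ν_r(Y)`, the Carathéodory Method II construction from `τ`. -/
noncomputable def nuSeq {X : Type*} [MetricSpace X] (ξ : ℕ → FinAddOuterProb X)
    (Y : Set X) : ℝ≥0∞ :=
  ⨆ (r : ℝ) (_ : 0 < r), nuSeqAux ξ r Y

lemma ENNReal.limsup_add_le_add_limsup {ι : Type*} {f : Filter ι} (u v : ι → ℝ≥0∞) :
    limsup (u + v) f ≤ limsup u f + limsup v f := by
  refine le_of_forall_gt fun d hd => ?_
  obtain ⟨a, ha, b, hb, hab⟩ := ENNReal.exists_add_lt_of_add_lt hd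
  refine lt_of_le_of_lt (limsup_le_of_le (by isBoundedDefault) ?_) hab
  filter_upwards [eventually_lt_of_limsup_lt ha, eventually_lt_of_limsup_lt hb] with x hax hbx
  exact add_le_add hax.le hbx.le

section tauSeq

variable {X : Type*} (ξ : ℕ → FinAddOuterProb X)

lemma tauSeq_mono {A B : Set X} (h : A ⊆ B) : tauSeq ξ A ≤ tauSeq ξ B :=
  limsup_le_limsup (Eventually.of_forall fun _ =>
    ENNReal.div_le_div_right (Finset.sum_le_sum fun j _ => (ξ j).mono' h) _)

lemma tauSeq_union_le (A B : Set X) : tauSeq ξ (A ∪ B) ≤ tauSeq ξ A + tauSeq ξ B := by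
  refine le_trans (limsup_le_limsup (Eventually.of_forall fun n => ?_))
    (ENNReal.limsup_add_le_add_limsup _ _)
  simp only [Pi.add_apply, ← ENNReal.add_div, ← Finset.sum_add_distrib]
  exact ENNReal.div_le_div_right (Finset.sum_le_sum fun j _ => (ξ j).subadd' A B) _

-- `τ ∅` need not vanish, hence the nonemptiness of `t`.
lemma tauSeq_biUnion_le {ι : Type*} (I : ι → Set X) {t : Finset ι} (ht : t.Nonempty) :
    tauSeq ξ (⋃ i ∈ t, I i) ≤ ∑ i ∈ t, tauSeq ξ (I i) := by
  classical
  induction ht using Finset.Nonempty.cons_induction with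
  | singleton a => simp
  | cons a s ha _ ih =>
    rw [Finset.cons_eq_insert, Finset.set_biUnion_insert, Finset.sum_insert ha]
    exact (tauSeq_union_le ξ _ _).trans (add_le_add_right ih _)

lemma tauSeq_le_tsum_of_isCompact [TopologicalSpace X] {K : Set X} (hK : IsCompact K)
    (I : ℕ → Set X) (hopen : ∀ n, IsOpen (I n)) (hcov : K ⊆ ⋃ n, I n) :
    tauSeq ξ K ≤ ∑' n, tauSeq ξ (I n) := by
  obtain ⟨t, ht⟩ := hK.elim_finite_subcover I hopen hcov
  have hcov' : K ⊆ ⋃ n ∈ insert 0 t, I n :=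
    ht.trans (biUnion_subset_biUnion_left (Finset.coe_subset.mpr (Finset.subset_insert 0 t)))
  calc tauSeq ξ K ≤ tauSeq ξ (⋃ n ∈ insert 0 t, I n) := tauSeq_mono ξ hcov'
    _ ≤ ∑ n ∈ insert 0 t, tauSeq ξ (I n) := tauSeq_biUnion_le ξ I (Finset.insert_nonempty 0 t)
    _ ≤ ∑' n, tauSeq ξ (I n) := ENNReal.sum_le_tsum _

lemma tauSeq_le_nuSeqAux_of_isCompact [MetricSpace X] {K : Set X} (hK : IsCompact K) (r : ℝ) :
    tauSeq ξ K ≤ nuSeqAux ξ r K :=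
  le_iInf fun I => le_iInf fun hcov => le_iInf fun hopen => le_iInf fun _ =>
    tauSeq_le_tsum_of_isCompact ξ hK I hopen hcov

end tauSeq

theorem tau_le_eta_on_closed_general
    {X : Type*} [MetricSpace X] [CompactSpace X] [MeasurableSpace X] [BorelSpace X]
    (ξ : ℕ → FinAddOuterProb X)
    (η : Measure X) (hη : ∀ E : Set X, MeasurableSet E → η E = nuSeq ξ E) :
    ∀ K : Set X, IsClosed K → tauSeq ξ K ≤ η K := by
  intro K hK
  rw [hη K hK.measurableSet, nuSeq]
  exact le_iSup₂_of_le 1 one_pos (tauSeq_le_nuSeqAux_of_isCompact ξ hK.isCompact 1)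

/-- Let `𝕏` be a compact metric space. If `η` is a probability measure (`η(𝕏) = 1`), then
`τ(K) ≤ η(K)` for every closed set `K ⊆ 𝕏`. -/
theorem tau_le_eta_on_closed
    {X : Type*} [MetricSpace X] [CompactSpace X] [MeasurableSpace X] [BorelSpace X]
    (ξ : ℕ → FinAddOuterProb X)
    (η : Measure X) (hη : ∀ E : Set X, MeasurableSet E → η E = nuSeq ξ E)
    (hprob : η Set.univ = 1) :
    ∀ K : Set X, IsClosed K → tauSeq ξ K ≤ η K :=
  tau_le_eta_on_closed_general ξ η hη
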